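/- Convergence of distributed improvement dynamics: starting from any strategy profile of the route selection game, every maximal sequence of unilateral strict payoff-improving deviations is finite, and its final profile is a pure Nash equilibrium, i.e., a profile from which no player can strictly increase its payoff by a unilateral deviation. In particular the distributed route selection scheme converges to a pure strategy Nash equilibrium within a finite number of iterations. -/

import Mathlib

open Finset

variable {ι V : Type*} [Fintype ι] [Nonempty ι] [DecidableEq ι] [Fintype V] [DecidableEq V]
variable {S : ι → Type*} [∀ m, Fintype (S m)] [∀ m, Nonempty (S m)]

/-- The congestion `z_v(s)`: the number of players whose strategy uses vertex `v`. -/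
def congestion (Vert : ∀ m : ι, S m → Finset V) (s : ∀ n, S n) (v : V) : ℕ :=
  (Finset.univ.filter fun n => v ∈ Vert n (s n)).card

/-- The reward part `Ũ^V_m(s)` of player `m`'s payoff. -/
def payoffV (Vert : ∀ m : ι, S m → Finset V) (ϱ : V → ℕ → ℝ) (m : ι) (s : ∀ n, S n) : ℝ :=
  ∑ v ∈ Vert m (s m), ϱ v (congestion Vert s v)

/-- Player `m`'s payoff `Ũ_m(s) = Σ_{v ∈ Vert(s_m)} ϱ_v(z_v(s)) − c_m(s_m)`. -/
def payoff (Vert : ∀ m : ι, S m → Finset V) (ϱ : V → ℕ → ℝ) (c : ∀ m : ι, S m → ℝ)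
    (m : ι) (s : ∀ n, S n) : ℝ :=
  payoffV Vert ϱ m s - c m (s m)

/-- The vertex part `Ψ^V(s) = Σ_{v ∈ V} Σ_{q=1}^{z_v(s)} ϱ_v(q)` of the potential. -/
def potentialV (Vert : ∀ m : ι, S m → Finset V) (ϱ : V → ℕ → ℝ) (s : ∀ n, S n) : ℝ :=
  ∑ v : V, ∑ q ∈ Finset.Icc 1 (congestion Vert s v), ϱ v q

/-- The potential `Ψ(s) = Σ_{v ∈ V} Σ_{q=1}^{z_v(s)} ϱ_v(q) − Σ_{n∈ι} c_n(s_n)`. -/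
def potential (Vert : ∀ m : ι, S m → Finset V) (ϱ : V → ℕ → ℝ) (c : ∀ m : ι, S m → ℝ)
    (s : ∀ n, S n) : ℝ :=
  potentialV Vert ϱ s - ∑ n : ι, c n (s n)

/-! `potential` is a Rosenthal potential: when player `m` deviates, the congestion changes by one
exactly at the vertices `m` enters or leaves, and the corresponding inner sum `Σ_{q ≤ z_v} ϱ_v(q)`
gains or loses its top term, which is the reward `m` collects or gives up there. So every strict
improvement strictly increases the potential; on the finite set of profiles this rules out
infinite improvement paths, and a maximiser of the potential is a pure Nash equilibrium. -/

open Function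

section PotentialGame

variable {ι : Type*} [DecidableEq ι] {S : ι → Type*}
  {R : Type*} [AddCommGroup R] [LinearOrder R] [IsOrderedAddMonoid R]

def IsExactPotential (u : ι → (∀ n, S n) → R) (Φ : (∀ n, S n) → R) : Prop :=
  ∀ m s (a : S m), Φ (update s m a) - Φ s = u m (update s m a) - u m s

def IsImprovementStep (u : ι → (∀ n, S n) → R) (s s' : ∀ n, S n) : Prop :=
  ∃ (m : ι) (a : S m), s' = update s m a ∧ u m s < u m s'

def IsPureNash (u : ι → (∀ n, S n) → R) (s : ∀ n, S n) : Prop :=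
  ∀ (m : ι) (a : S m), u m (update s m a) ≤ u m s

namespace IsExactPotential

variable {u : ι → (∀ n, S n) → R} {Φ : (∀ n, S n) → R}

theorem lt_of_isImprovementStep (hΦ : IsExactPotential u Φ) {s s' : ∀ n, S n}
    (h : IsImprovementStep u s s') : Φ s < Φ s' := by
  obtain ⟨m, a, rfl, hlt⟩ := h
  exact sub_pos.mp ((hΦ m s a).symm ▸ sub_pos.mpr hlt)

theorem not_exists_infinite_improvement_path [Finite (∀ n, S n)] (hΦ : IsExactPotential u Φ) :
    ¬ ∃ seq : ℕ → ∀ n, S n, ∀ t, IsImprovementStep u (seq t) (seq (t + 1)) := by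
  rintro ⟨seq, hseq⟩
  have hmono : StrictMono (Φ ∘ seq) :=
    strictMono_nat_of_lt_succ fun t => hΦ.lt_of_isImprovementStep (hseq t)
  exact not_injective_infinite_finite seq hmono.injective.of_comp

theorem isPureNash_of_forall_le (hΦ : IsExactPotential u Φ) {s : ∀ n, S n}
    (hs : ∀ s', Φ s' ≤ Φ s) : IsPureNash u s := fun m a =>
  sub_nonpos.mp (hΦ m s a ▸ sub_nonpos.mpr (hs _))

theorem exists_isPureNash [Finite (∀ n, S n)] [Nonempty (∀ n, S n)]
    (hΦ : IsExactPotential u Φ) : ∃ s, IsPureNash u s :=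
  let ⟨s, hs⟩ := Finite.exists_max Φ
  ⟨s, hΦ.isPureNash_of_forall_le hs⟩

end IsExactPotential

end PotentialGame

theorem Fintype.sum_apply_update {ι : Type*} [Fintype ι] [DecidableEq ι] {S : ι → Type*}
    {M : Type*} [AddCommMonoid M] (g : ∀ n, S n → M) (s : ∀ n, S n) (m : ι) (a : S m) :
    ∑ n, g n (update s m a n) = ∑ n ∈ univ.erase m, g n (s n) + g m a := by
  rw [← sum_erase_add _ _ (mem_univ m), update_self]
  refine congrArg (· + g m a) (Finset.sum_congr rfl fun n hn => ?_)
  rw [update_of_ne (ne_of_mem_erase hn)]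

theorem Finset.sum_Icc_one_add_ite {M : Type*} [AddCommMonoid M] (f : ℕ → M) (k : ℕ)
    (p : Prop) [Decidable p] :
    ∑ q ∈ Icc 1 (k + if p then 1 else 0), f q = ∑ q ∈ Icc 1 k, f q + if p then f (k + 1) else 0 := by
  split_ifs
  · exact sum_Icc_succ_top (by omega) f
  · simp

section RouteGame

variable {ι V : Type*} [Fintype ι] [DecidableEq V] {S : ι → Type*}
  (Vert : ∀ m : ι, S m → Finset V)

theorem congestion_eq_sum (s : ∀ n, S n) (v : V) :
    congestion Vert s v = ∑ n, if v ∈ Vert n (s n) then 1 else 0 :=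
  card_filter _ _

variable [DecidableEq ι]

theorem sum_Icc_congestion_update_sub (ϱ : ℕ → ℝ) (s : ∀ n, S n) (m : ι) (a : S m) (v : V) :
    ∑ q ∈ Icc 1 (congestion Vert (update s m a) v), ϱ q - ∑ q ∈ Icc 1 (congestion Vert s v), ϱ q =
      (if v ∈ Vert m a then ϱ (congestion Vert (update s m a) v) else 0) -
        if v ∈ Vert m (s m) then ϱ (congestion Vert s v) else 0 := by
  set others := ∑ n ∈ univ.erase m, if v ∈ Vert n (s n) then 1 else 0
  have hs : congestion Vert s v = others + if v ∈ Vert m (s m) then 1 else 0 := by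
    rw [congestion_eq_sum, sum_erase_add _ _ (mem_univ m)]
  have hs' : congestion Vert (update s m a) v = others + if v ∈ Vert m a then 1 else 0 := by
    rw [congestion_eq_sum, Fintype.sum_apply_update (fun n t => if v ∈ Vert n t then 1 else 0)]
  rw [hs, hs', sum_Icc_one_add_ite, sum_Icc_one_add_ite]
  split_ifs <;> simp

theorem potentialV_update_sub [Fintype V] (ϱ : V → ℕ → ℝ) (s : ∀ n, S n) (m : ι) (a : S m) :
    potentialV Vert ϱ (update s m a) - potentialV Vert ϱ s =
      payoffV Vert ϱ m (update s m a) - payoffV Vert ϱ m s := by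
  rw [potentialV, potentialV, payoffV, payoffV, update_self, ← Fintype.sum_ite_mem (Vert m a),
    ← Fintype.sum_ite_mem (Vert m (s m)), ← sum_sub_distrib, ← sum_sub_distrib]
  exact sum_congr rfl fun v _ => sum_Icc_congestion_update_sub Vert (ϱ v) s m a v

theorem potential_isExactPotential [Fintype V] (ϱ : V → ℕ → ℝ) (c : ∀ m : ι, S m → ℝ) :
    IsExactPotential (payoff Vert ϱ c) (potential Vert ϱ c) := by
  intro m s a
  have hV := potentialV_update_sub Vert ϱ s m a
  simp only [potential, payoff, Fintype.sum_apply_update c, update_self]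
  rw [← sum_erase_add _ _ (mem_univ m)]
  linear_combination hV

end RouteGame

/-- Convergence of distributed improvement dynamics: (i) every sequence of unilateral
strict payoff-improving deviations is finite (no infinite improvement sequence exists);
(ii) any profile from which no player can strictly improve by a unilateral deviation
(the final profile of a maximal improvement sequence) is a pure Nash equilibrium;
(iii) consequently a pure strategy Nash equilibrium exists. -/
theorem distributed_improvement_converges (Vert : ∀ m : ι, S m → Finset V)
    (ϱ : V → ℕ → ℝ) (c : ∀ m : ι, S m → ℝ) :
    (¬ ∃ seq : ℕ → ∀ n, S n, ∀ t : ℕ, ∃ (m : ι) (s' : S m),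
        seq (t + 1) = Function.update (seq t) m s' ∧
        payoff Vert ϱ c m (seq t) < payoff Vert ϱ c m (seq (t + 1))) ∧
    (∀ sFinal : ∀ n, S n,
        (¬ ∃ (m : ι) (s' : S m),
          payoff Vert ϱ c m sFinal < payoff Vert ϱ c m (Function.update sFinal m s')) →
        ∀ (m : ι) (sm : S m),
          payoff Vert ϱ c m (Function.update sFinal m sm) ≤ payoff Vert ϱ c m sFinal) ∧
    (∃ sStar : ∀ n, S n, ∀ (m : ι) (sm : S m),
        payoff Vert ϱ c m (Function.update sStar m sm) ≤ payoff Vert ϱ c m sStar) := by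
  have hΦ := potential_isExactPotential Vert ϱ c
  exact ⟨hΦ.not_exists_infinite_improvement_path,
    fun s hs m a => not_lt.mp fun hlt => hs ⟨m, a, hlt⟩, hΦ.exists_isPureNash⟩
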